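/- arXiv:1612.09288 — 2 statements merged into one kernel-verified Lean document; each statement's English description precedes it below -/
import Mathlib

section
/- Let R be a commutative Noetherian ring, t ∈ R a non-zerodivisor, and N a finitely generated R-module such that multiplication by t is injective on Ext¹_R(N, R). Then the natural map Hom_R(N, R) ⊗_R R/(t) → Hom_{R/(t)}(N ⊗_R R/(t), R/(t)) is an isomorphism. -/
open CategoryTheory CategoryTheory.Abelian

section Aux

universe w' w v u

variable {C : Type u} [Category.{v} C] [Abelian C] [HasExt.{w} C]
  [HasDerivedCategory.{w'} C]

/-- The natural isomorphism `singleFunctor C 0 ⋙ homologyFunctor C 0 ≅ 𝟭 C`. -/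
noncomputable def auxSingleHomologyIso (C : Type u) [Category.{v} C] [Abelian C]
    [HasDerivedCategory.{w'} C] :
    DerivedCategory.singleFunctor C 0 ⋙ DerivedCategory.homologyFunctor C 0 ≅ 𝟭 C :=
  Functor.isoWhiskerRight ((SingleFunctors.evaluation _ _ 0).mapIso
      (DerivedCategory.singleFunctorsPostcompQIso C)) (DerivedCategory.homologyFunctor C 0) ≪≫
    Functor.associator _ _ _ ≪≫
    Functor.isoWhiskerLeft (CochainComplex.singleFunctor C 0) (DerivedCategory.homologyFunctorFactors C 0) ≪≫
    HomologicalComplex.homologyFunctorSingleIso C (ComplexShape.up ℤ) 0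

namespace CategoryTheory.Abelian.Ext

variable {X Y Z : C}

/-- The underlying morphism in the derived category of a degree-zero Ext element. -/
noncomputable def auxToHomD (α : Ext X Y 0) :
    (DerivedCategory.singleFunctor C 0).obj X ⟶ (DerivedCategory.singleFunctor C 0).obj Y :=
  α.hom ≫ (shiftFunctorZero' (DerivedCategory C) (((0 : ℕ) : ℤ)) (by simp)).hom.app _

lemma auxToHomD_mk₀ (f : X ⟶ Y) :
    auxToHomD (Ext.mk₀ f) = (DerivedCategory.singleFunctor C 0).map f := by
  dsimp [auxToHomD]
  rw [Ext.mk₀_hom]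
  dsimp [ShiftedHom.mk₀]
  simp

lemma auxToHomD_comp_mk₀ (α : Ext X Y 0) (g : Y ⟶ Z) :
    auxToHomD (α.comp (Ext.mk₀ g) (add_zero 0)) =
      auxToHomD α ≫ (DerivedCategory.singleFunctor C 0).map g := by
  dsimp only [auxToHomD]
  rw [← Ext.hom_comp_singleFunctor_map_shift (C := C) α g, Category.assoc]
  erw [(shiftFunctorZero' (DerivedCategory C) (((0 : ℕ) : ℤ)) (by simp)).hom.naturality
    ((DerivedCategory.singleFunctor C 0).map g)]
  simp

/-- The morphism `X ⟶ Y` obtained by applying `H⁰` to a degree-zero Ext element. -/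
noncomputable def auxToHom (α : Ext X Y 0) : X ⟶ Y :=
  (auxSingleHomologyIso C).inv.app X ≫
    (DerivedCategory.homologyFunctor C 0).map (auxToHomD α) ≫ (auxSingleHomologyIso C).hom.app Y

lemma auxToHom_mk₀ (f : X ⟶ Y) : auxToHom (Ext.mk₀ f) = f := by
  dsimp only [auxToHom]
  rw [auxToHomD_mk₀]
  have h := (auxSingleHomologyIso C).hom.naturality f
  dsimp at h
  rw [h, Iso.inv_hom_id_app_assoc]

lemma auxToHom_comp_mk₀ (α : Ext X Y 0) (g : Y ⟶ Z) :
    auxToHom (α.comp (Ext.mk₀ g) (add_zero 0)) = auxToHom α ≫ g := by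
  dsimp only [auxToHom]
  rw [auxToHomD_comp_mk₀, Functor.map_comp, Category.assoc]
  have h := (auxSingleHomologyIso C).hom.naturality g
  dsimp at h
  rw [h]
  simp

end CategoryTheory.Abelian.Ext

end Aux

open CategoryTheory CategoryTheory.Abelian

/-- If `t` is a non-zerodivisor of a Noetherian commutative ring `R` and `N` a finitely
generated `R`-module such that multiplication by `t` is injective on `Ext¹_R(N,R)`, then the
natural map `Hom_R(N,R) ⊗ R/(t) → Hom_{R/(t)}(N ⊗ R/(t), R/(t))` is an isomorphism.
Here `Hom_R(N,R) ⊗ R/(t)` is identified with `Hom_R(N,R)/(t)·Hom_R(N,R)` and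
`Hom_{R/(t)}(N ⊗ R/(t), R/(t))` with `Hom_R(N, R/(t))`, so the natural map is the one induced
by postcomposition with the quotient map `R → R/(t)`. -/
theorem stmt_8 {R : Type} [CommRing R] [IsNoetherianRing R] (t : R)
    (ht : t ∈ nonZeroDivisors R)
    (N : Type) [AddCommGroup N] [Module R N] [Module.Finite R N]
    [HasExt.{0} (ModuleCat.{0} R)]
    (hExt : Function.Injective
      (fun x : Ext (ModuleCat.of R N) (ModuleCat.of R R) 1 =>
        x.comp (Ext.mk₀ (ModuleCat.ofHom (LinearMap.lsmul R R t))) (add_zero 1)))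
    (hker : (Ideal.span {t} • (⊤ : Submodule R (N →ₗ[R] R)) : Submodule R (N →ₗ[R] R)) ≤
      LinearMap.ker (LinearMap.llcomp R N R (R ⧸ Ideal.span {t}) (Ideal.span {t}).mkQ)) :
    Function.Bijective
      (Submodule.liftQ (Ideal.span {t} • (⊤ : Submodule R (N →ₗ[R] R)))
        (LinearMap.llcomp R N R (R ⧸ Ideal.span {t}) (Ideal.span {t}).mkQ) hker) := by
  classical
  constructor
  · -- injectivity: elementary
    rw [← LinearMap.ker_eq_bot]
    apply Submodule.ker_liftQ_eq_bot
    intro ψ hψ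
    rw [LinearMap.mem_ker] at hψ
    have hψ' : ∀ n : N, (Ideal.span {t}).mkQ (ψ n) = 0 := fun n => by
      have := LinearMap.congr_fun hψ n
      simpa [LinearMap.llcomp_apply] using this
    have hmem : ∀ n : N, ∃ c : R, c * t = ψ n := fun n => by
      have : ψ n ∈ Ideal.span {t} := by
        rw [← Submodule.Quotient.mk_eq_zero]
        simpa [Submodule.mkQ_apply] using hψ' n
      exact Ideal.mem_span_singleton'.1 this
    choose c hc using hmem
    have hcancel : ∀ x y : R, x * t = y * t → x = y := fun x y h =>
      (mul_cancel_right_mem_nonZeroDivisors ht).1 h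
    let χ : N →ₗ[R] R :=
      { toFun := c
        map_add' := fun a b => by
          apply hcancel
          rw [add_mul, hc, hc, hc, map_add]
        map_smul' := fun r a => by
          apply hcancel
          rw [RingHom.id_apply, smul_mul_assoc, hc, hc, map_smul, smul_eq_mul] }
    have hψχ : ψ = t • χ := by
      ext n
      show ψ n = t • χ n
      rw [smul_eq_mul, mul_comm]
      exact (hc n).symm
    rw [hψχ]
    exact Submodule.smul_mem_smul (Ideal.mem_span_singleton_self t) trivial
  · -- surjectivity: via the long exact sequence of Ext
    intro φ
    letI := HasDerivedCategory.standard (ModuleCat.{0} R)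
    let S : ShortComplex (ModuleCat.{0} R) :=
      ShortComplex.mk (ModuleCat.ofHom (LinearMap.lsmul R R t))
        (ModuleCat.ofHom (Y := R ⧸ Ideal.span {t}) (Ideal.span {t}).mkQ) (by
          refine ModuleCat.hom_ext (LinearMap.ext fun x => ?_)
          show (Ideal.span {t}).mkQ (LinearMap.lsmul R R t x) = 0
          rw [Submodule.mkQ_apply, Submodule.Quotient.mk_eq_zero]
          exact Ideal.mem_span_singleton'.2 ⟨x, by simp [mul_comm]⟩)
    have hS : S.ShortExact := by
      have hex : ∀ x : R, (Ideal.span {t}).mkQ x = 0 → ∃ y : R,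
          LinearMap.lsmul R R t y = x := by
        intro x hx
        have hx' : x ∈ Ideal.span {t} := by
          rwa [← Submodule.Quotient.mk_eq_zero, ← Submodule.mkQ_apply]
        obtain ⟨y, hy⟩ := Ideal.mem_span_singleton'.1 hx'
        exact ⟨y, by show t * y = x; rw [mul_comm]; exact hy⟩
      have hinj : Function.Injective (LinearMap.lsmul R R t) := by
        intro a b h
        simp only [LinearMap.lsmul_apply, smul_eq_mul] at h
        exact (mul_cancel_right_mem_nonZeroDivisors ht).1
          (by rw [mul_comm a t, mul_comm b t]; exact h)
      refine { exact := ?_, mono_f := ?_, epi_g := ?_ }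
      · rw [ShortComplex.moduleCat_exact_iff]
        exact hex
      · rw [ModuleCat.mono_iff_injective]
        exact hinj
      · rw [ModuleCat.epi_iff_surjective]
        exact Submodule.mkQ_surjective _
    have hδ : (Ext.mk₀ (ModuleCat.ofHom (X := N) φ)).comp hS.extClass (zero_add 1) = 0 := by
      apply hExt
      show ((Ext.mk₀ (ModuleCat.ofHom (X := N) φ)).comp hS.extClass (zero_add 1)).comp
          (Ext.mk₀ (ModuleCat.ofHom (LinearMap.lsmul R R t))) (add_zero 1) =
        (0 : Ext (ModuleCat.of R N) (ModuleCat.of R R) 1).comp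
          (Ext.mk₀ (ModuleCat.ofHom (LinearMap.lsmul R R t))) (add_zero 1)
      rw [Ext.comp_assoc_of_third_deg_zero, Ext.zero_comp]
      have h2 : hS.extClass.comp (Ext.mk₀ (ModuleCat.ofHom (LinearMap.lsmul R R t)))
          (add_zero 1) = 0 := hS.extClass_comp
      rw [h2, Ext.comp_zero]
    obtain ⟨x₂, hx₂⟩ := Ext.covariant_sequence_exact₃ (ModuleCat.of R N) hS
      (Ext.mk₀ (ModuleCat.ofHom (X := N) φ)) rfl hδ
    let ψ : N →ₗ[R] R := (Ext.auxToHom x₂).hom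
    have hcomp : Ext.auxToHom (x₂.comp (Ext.mk₀ S.g) (add_zero 0)) = Ext.auxToHom x₂ ≫ S.g :=
      Ext.auxToHom_comp_mk₀ x₂ S.g
    rw [hx₂, Ext.auxToHom_mk₀] at hcomp
    refine ⟨Submodule.Quotient.mk ψ, ?_⟩
    rw [Submodule.liftQ_apply]
    ext n
    show (Ideal.span {t}).mkQ (ψ n) = φ n
    exact congrArg (fun f => f.hom n) hcomp.symm
end

section
/- Let A = (aᵢⱼ) be an m×m matrix over a commutative ring R and B, C be m×N matrices with B ≡ A·C modulo an ideal I (entrywise). If some m×m minor of C is a unit modulo I, then the ideal generated by all m×m minors of B together with I equals the ideal generated by det(A) and I: I_m(B) + I = (det A) + I. -/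
/-! An ideal `J ⊔ I` is determined by the image of `J` in `R ⧸ I`, so it suffices to work
modulo `I`. There `B = A * C`, the maximal minors of `A * C` are `det A` times those of `C`,
and the minors of `C` generate the unit ideal. -/

/-- The ideal generated by the `m×m` minors of an `m×N` matrix `B`. -/
def maxMinorsIdeal {R : Type*} [CommRing R] (m N : ℕ) (B : Matrix (Fin m) (Fin N) R) :
    Ideal R :=
  Ideal.span {x | ∃ s : Fin m → Fin N, Function.Injective s ∧ x = (B.submatrix id s).det}

section MaxMinors

variable {R : Type*} [CommRing R] {m N : ℕ}

theorem maxMinorsIdeal_map {S : Type*} [CommRing S] (f : R →+* S)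
    (B : Matrix (Fin m) (Fin N) R) :
    (maxMinorsIdeal m N B).map f = maxMinorsIdeal m N (B.map f) := by
  rw [maxMinorsIdeal, maxMinorsIdeal, Ideal.map_span]
  congr 1
  ext x
  simp only [Set.mem_image, Set.mem_ofPred_eq]
  constructor
  · rintro ⟨_, ⟨s, hs, rfl⟩, rfl⟩
    exact ⟨s, hs, by rw [RingHom.map_det]; rfl⟩
  · rintro ⟨s, hs, rfl⟩
    exact ⟨_, ⟨s, hs, rfl⟩, by rw [RingHom.map_det]; rfl⟩

theorem maxMinorsIdeal_mul (A : Matrix (Fin m) (Fin m) R) (C : Matrix (Fin m) (Fin N) R) :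
    maxMinorsIdeal m N (A * C) = Ideal.span {A.det} * maxMinorsIdeal m N C := by
  have minor_mul (s : Fin m → Fin N) : ((A * C).submatrix id s).det =
      A.det * (C.submatrix id s).det := by
    rw [← Matrix.det_mul]
    rfl
  rw [maxMinorsIdeal, maxMinorsIdeal, Ideal.span_mul_span', Set.singleton_mul]
  congr 1
  ext x
  simp only [Set.mem_image, Set.mem_ofPred_eq]
  constructor
  · rintro ⟨s, hs, rfl⟩
    exact ⟨_, ⟨s, hs, rfl⟩, (minor_mul s).symm⟩
  · rintro ⟨_, ⟨s, hs, rfl⟩, rfl⟩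
    exact ⟨s, hs, (minor_mul s).symm⟩

theorem maxMinorsIdeal_eq_top {C : Matrix (Fin m) (Fin N) R}
    (hC : ∃ s : Fin m → Fin N, Function.Injective s ∧ IsUnit (C.submatrix id s).det) :
    maxMinorsIdeal m N C = ⊤ := by
  obtain ⟨s, hs, hunit⟩ := hC
  exact Ideal.eq_top_of_isUnit_mem _ (Ideal.subset_span ⟨s, hs, rfl⟩) hunit

end MaxMinors

/-- If `B ≡ A·C` modulo an ideal `I` entrywise and some `m×m` minor of `C` is invertible
modulo `I`, then `I_m(B) + I = (det A) + I`. -/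
theorem stmt_12 {R : Type*} [CommRing R] (m N : ℕ) (I : Ideal R)
    (A : Matrix (Fin m) (Fin m) R) (B C : Matrix (Fin m) (Fin N) R)
    (hBAC : ∀ i j, (B - A * C) i j ∈ I)
    (hC : ∃ s : Fin m → Fin N, Function.Injective s ∧
      IsUnit (Ideal.Quotient.mk I ((C.submatrix id s).det))) :
    maxMinorsIdeal m N B ⊔ I = Ideal.span {A.det} ⊔ I := by
  set π := Ideal.Quotient.mk I
  have hB : B.map π = A.map π * C.map π := by
    rw [← Matrix.map_mul]
    ext i j
    exact Ideal.Quotient.eq.mpr (hBAC i j)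
  have hCtop : maxMinorsIdeal m N (C.map π) = ⊤ := by
    obtain ⟨s, hs, hunit⟩ := hC
    exact maxMinorsIdeal_eq_top ⟨s, hs, by rw [RingHom.map_det] at hunit; exact hunit⟩
  rw [sup_comm, ← Ideal.comap_map_quotientMk, sup_comm _ I, ← Ideal.comap_map_quotientMk]
  congr 1
  rw [maxMinorsIdeal_map, hB, maxMinorsIdeal_mul, hCtop, Ideal.mul_top, Ideal.map_span,
    Set.image_singleton, RingHom.map_det]
  rfl
end
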